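/- arXiv:2404.16583 — 2 statements merged into one kernel-verified Lean document; each statement's English description precedes it below -/
import Mathlib

section
/- Variance of the Rademacher (Hutchinson) trace estimator: if u ∈ ℝ^n has i.i.d. entries taking values ±1 each with probability 1/2 and A is a symmetric real n×n matrix, then Var(uᵀ A u) = 2(‖A‖_F² - Σ_j A_{jj}²). -/
/-! Write `χ_S = ∏_{i ∈ S} u_i` for the Walsh functions of the Rademacher vector. Since
`u_i ^ 2 = 1` we have `χ_S χ_T = χ_{S ∆ T}`, and independence with `𝔼 u_i = 0` gives
`𝔼 χ_S = [S = ∅]`; hence `Cov(χ_S, χ_T) = [S = T ≠ ∅]`. As `u_j u_k = χ_{{j} ∆ {k}}`, the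
quadratic form is `∑_{j,k} A_jk χ_{{j} ∆ {k}}`: diagonal terms are constant, and the
off-diagonal `χ_{{j,k}}` occurs for `(j, k)` and `(k, j)`, so
`Var = ∑_{j ≠ k} A_jk (A_jk + A_kj) = 2 ∑_{j ≠ k} A_jk ^ 2`. -/

open MeasureTheory ProbabilityTheory Matrix
open scoped symmDiff ENNReal

theorem Finset.prod_mul_prod_eq_prod_symmDiff {ι M : Type*} [DecidableEq ι] [CommMonoid M]
    {f : ι → M} (s t : Finset ι) (hf : ∀ i ∈ s ∩ t, f i ^ 2 = 1) :
    (∏ i ∈ s, f i) * ∏ i ∈ t, f i = ∏ i ∈ s ∆ t, f i := by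
  have hsq : (∏ i ∈ s ∩ t, f i) * ∏ i ∈ s ∩ t, f i = 1 := by
    rw [← prod_mul_distrib]
    exact prod_eq_one fun i hi ↦ by rw [← sq, hf i hi]
  rw [← prod_sdiff (inter_subset_left : s ∩ t ⊆ s), ← prod_sdiff (inter_subset_right : s ∩ t ⊆ t),
    sdiff_inter_self_left, sdiff_inter_self_right, Finset.symmDiff_def,
    prod_union disjoint_sdiff_sdiff, mul_mul_mul_comm, hsq, mul_one]

theorem Finset.singleton_symmDiff_singleton_eq_iff {α : Type*} [DecidableEq α] {j k l m : α}
    (hjk : j ≠ k) : ({j} ∆ {k} : Finset α) = {l} ∆ {m} ↔ (l = j ∧ m = k) ∨ (l = k ∧ m = j) := by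
  refine ⟨fun h ↦ ?_, ?_⟩
  · simp only [Finset.ext_iff, mem_symmDiff, mem_singleton] at h
    have := h j; have := h k; have := h l
    grind
  · rintro (⟨rfl, rfl⟩ | ⟨rfl, rfl⟩)
    · rfl
    · exact symmDiff_comm _ _

theorem Matrix.dotProduct_mulVec_self_eq_sum {ι R : Type*} [Fintype ι] [CommSemiring R]
    (A : Matrix ι ι R) (v : ι → R) : v ⬝ᵥ A *ᵥ v = ∑ p : ι × ι, A p.1 p.2 * (v p.1 * v p.2) := by
  simp only [dotProduct, mulVec, Finset.mul_sum, Fintype.sum_prod_type]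
  exact Finset.sum_congr rfl fun j _ ↦ Finset.sum_congr rfl fun k _ ↦ by ring

theorem Matrix.IsSymm.sum_sum_mul_ite_singleton_symmDiff_eq {ι : Type*} [Fintype ι]
    [DecidableEq ι] {A : Matrix ι ι ℝ} (hA : A.IsSymm) :
    ∑ p : ι × ι, ∑ q : ι × ι, A p.1 p.2 * (A q.1 q.2 *
        if ({p.1} ∆ {p.2} : Finset ι) = {q.1} ∆ {q.2} ∧ ({p.1} ∆ {p.2} : Finset ι).Nonempty
        then 1 else 0)
      = 2 * (∑ j, ∑ k, A j k ^ 2 - ∑ j, A j j ^ 2) := by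
  have hrow (j k : ι) : ∑ q : ι × ι, A q.1 q.2 *
      (if ({j} ∆ {k} : Finset ι) = {q.1} ∆ {q.2} ∧ ({j} ∆ {k} : Finset ι).Nonempty then 1 else 0)
        = if j = k then 0 else 2 * A j k := by
    split_ifs with hjk
    · simp [hjk]
    · have hpair (q : ι × ι) : ({j} ∆ {k} = ({q.1} ∆ {q.2} : Finset ι) ∧
          ({j} ∆ {k} : Finset ι).Nonempty) ↔ q ∈ ({(j, k), (k, j)} : Finset (ι × ι)) := by
        simp [Finset.singleton_symmDiff_singleton_eq_iff hjk, hjk, Prod.ext_iff]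
      simp only [hpair, mul_ite, mul_one, mul_zero, Finset.sum_ite_mem, Finset.univ_inter]
      rw [Finset.sum_pair fun h ↦ hjk (congrArg Prod.fst h), hA.apply j k]
      ring
  have hdiag (j k : ι) : A j k * (if j = k then 0 else 2 * A j k)
      = 2 * A j k ^ 2 - if j = k then 2 * A j k ^ 2 else 0 := by
    split_ifs <;> ring
  simp only [← Finset.mul_sum, hrow, Fintype.sum_prod_type, hdiag, Finset.sum_sub_distrib,
    Finset.sum_ite_eq, Finset.mem_univ, if_true]
  ring

namespace ProbabilityTheory

variable {Ω ι : Type*}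

def walsh (X : ι → Ω → ℝ) (S : Finset ι) (ω : Ω) : ℝ := ∏ i ∈ S, X i ω

variable [MeasurableSpace Ω] {μ : Measure Ω} {X : ι → Ω → ℝ}

lemma walsh_mul_walsh_ae_eq [DecidableEq ι] (hsq : ∀ i, ∀ᵐ ω ∂μ, X i ω ^ 2 = 1)
    (S T : Finset ι) : walsh X S * walsh X T =ᵐ[μ] walsh X (S ∆ T) := by
  filter_upwards [(S ∩ T).eventually_all.2 fun i _ ↦ hsq i] with ω hω
  exact Finset.prod_mul_prod_eq_prod_symmDiff S T hω

lemma memLp_walsh [IsFiniteMeasure μ] (hmeas : ∀ i, AEMeasurable (X i) μ)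
    (hsq : ∀ i, ∀ᵐ ω ∂μ, X i ω ^ 2 = 1) (S : Finset ι) (p : ℝ≥0∞) :
    MemLp (walsh X S) p μ := by
  refine MemLp.of_bound (Finset.aemeasurable_fun_prod S fun i _ ↦ hmeas i).aestronglyMeasurable
    1 ?_
  filter_upwards [S.eventually_all.2 fun i _ ↦ hsq i] with ω hω
  rw [walsh, norm_prod]
  exact (Finset.prod_eq_one fun i hi ↦ by simpa [abs_eq zero_le_one] using hω i hi).le

lemma integral_walsh [Fintype ι] [DecidableEq ι] (hX : iIndepFun X μ)
    (hmeas : ∀ i, AEMeasurable (X i) μ) (hmean : ∀ i, μ[X i] = 0) (S : Finset ι) :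
    μ[walsh X S] = if S = ∅ then 1 else 0 := by
  have := hX.isProbabilityMeasure
  have hprod : μ[walsh X S] = ∏ i ∈ S, μ[X i] := calc
    μ[walsh X S] = ∫ ω, ∏ i, (if i ∈ S then X i ω else 1) ∂μ := by
      simp [walsh, Finset.prod_ite_mem]
    _ = ∏ i, ∫ ω, (if i ∈ S then X i ω else 1) ∂μ :=
      hX.integral_fun_prod_comp (f := fun i x ↦ if i ∈ S then x else 1) hmeas
        fun i ↦ by split_ifs <;> fun_prop
    _ = ∏ i, (if i ∈ S then μ[X i] else 1) :=
      Finset.prod_congr rfl fun i _ ↦ by split_ifs <;> simp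
    _ = ∏ i ∈ S, μ[X i] := by rw [Finset.prod_ite_mem, Finset.univ_inter]
  rw [hprod]
  split_ifs with hS
  · simp [hS]
  · obtain ⟨i, hi⟩ := Finset.nonempty_iff_ne_empty.2 hS
    exact Finset.prod_eq_zero hi (hmean i)

lemma covariance_walsh [Fintype ι] [DecidableEq ι] (hX : iIndepFun X μ)
    (hmeas : ∀ i, AEMeasurable (X i) μ) (hmean : ∀ i, μ[X i] = 0)
    (hsq : ∀ i, ∀ᵐ ω ∂μ, X i ω ^ 2 = 1) (S T : Finset ι) :
    cov[walsh X S, walsh X T; μ] = if S = T ∧ S.Nonempty then 1 else 0 := by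
  have := hX.isProbabilityMeasure
  rw [covariance_eq_sub (memLp_walsh hmeas hsq S 2) (memLp_walsh hmeas hsq T 2),
    integral_congr_ae (walsh_mul_walsh_ae_eq hsq S T)]
  simp only [integral_walsh hX hmeas hmean, Finset.symmDiff_eq_empty]
  by_cases hST : S = T <;> by_cases hT : T = ∅ <;> simp [hST, hT, Finset.nonempty_iff_ne_empty]

theorem variance_dotProduct_mulVec_of_rademacher [Fintype ι] (hX : iIndepFun X μ)
    (hmeas : ∀ i, AEMeasurable (X i) μ) (hmean : ∀ i, μ[X i] = 0)
    (hsq : ∀ i, ∀ᵐ ω ∂μ, X i ω ^ 2 = 1) {A : Matrix ι ι ℝ} (hA : A.IsSymm) :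
    Var[fun ω ↦ (fun i ↦ X i ω) ⬝ᵥ A *ᵥ (fun i ↦ X i ω); μ]
      = 2 * (∑ j, ∑ k, A j k ^ 2 - ∑ j, A j j ^ 2) := by
  classical
  have := hX.isProbabilityMeasure
  have hwalsh : (fun ω ↦ (fun i ↦ X i ω) ⬝ᵥ A *ᵥ (fun i ↦ X i ω))
      =ᵐ[μ] fun ω ↦ ∑ p : ι × ι, A p.1 p.2 * walsh X ({p.1} ∆ {p.2}) ω := by
    filter_upwards [ae_all_iff.2 fun p : ι × ι ↦ walsh_mul_walsh_ae_eq hsq {p.1} {p.2}]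
      with ω hω
    simp only [dotProduct_mulVec_self_eq_sum, ← hω]
    simp [walsh]
  rw [variance_congr hwalsh,
    variance_fun_sum (X := fun (p : ι × ι) ω ↦ A p.1 p.2 * walsh X ({p.1} ∆ {p.2}) ω)
      fun p ↦ (memLp_walsh hmeas hsq _ 2).const_mul (A p.1 p.2)]
  simp only [covariance_const_mul_left]
  simp only [covariance_const_mul_right, covariance_walsh hX hmeas hmean hsq]
  exact hA.sum_sum_mul_ite_singleton_symmDiff_eq

lemma ae_eq_one_or_eq_neg_one_of_rademacher [IsProbabilityMeasure μ] {Y : Ω → ℝ}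
    (hY : Measurable Y) (h1 : μ {ω | Y ω = 1} = 1 / 2) (h2 : μ {ω | Y ω = -1} = 1 / 2) :
    ∀ᵐ ω ∂μ, Y ω = 1 ∨ Y ω = -1 := by
  have hs1 : MeasurableSet {ω | Y ω = 1} := hY (measurableSet_singleton 1)
  have hs2 : MeasurableSet {ω | Y ω = -1} := hY (measurableSet_singleton (-1))
  have hdisj : Disjoint {ω | Y ω = 1} {ω | Y ω = -1} :=
    Set.disjoint_left.2 fun ω (h : Y ω = 1) (h' : Y ω = -1) ↦ by norm_num [h] at h'
  have hunion : μ ({ω | Y ω = 1} ∪ {ω | Y ω = -1}) = 1 := by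
    rw [measure_union hdisj hs2, h1, h2, ENNReal.add_halves]
  rw [ae_iff]
  exact (prob_compl_eq_zero_iff (hs1.union hs2)).2 hunion

lemma integral_eq_zero_of_rademacher [IsProbabilityMeasure μ] {Y : Ω → ℝ}
    (hY : Measurable Y) (h1 : μ {ω | Y ω = 1} = 1 / 2) (h2 : μ {ω | Y ω = -1} = 1 / 2) :
    μ[Y] = 0 := by
  have hs1 : MeasurableSet {ω | Y ω = 1} := hY (measurableSet_singleton 1)
  have hs2 : MeasurableSet {ω | Y ω = -1} := hY (measurableSet_singleton (-1))
  have hind : Y =ᵐ[μ] {ω | Y ω = 1}.indicator 1 - {ω | Y ω = -1}.indicator 1 := by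
    filter_upwards [ae_eq_one_or_eq_neg_one_of_rademacher hY h1 h2] with ω hω
    rcases hω with h | h <;> norm_num [Set.indicator_apply, h]
  rw [integral_congr_ae hind, integral_sub' ((integrable_const 1).indicator hs1)
    ((integrable_const 1).indicator hs2), integral_indicator_one hs1, integral_indicator_one hs2,
    measureReal_def, measureReal_def, h1, h2, sub_self]

end ProbabilityTheory

/-- Variance of the Hutchinson trace estimator with i.i.d. Rademacher probe
vector: `Var(uᵀ A u) = 2 (‖A‖_F² − Σ_j A_{jj}²)` for symmetric `A`. -/
theorem hutchinson_rademacher_variance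
    {n : ℕ} {Ω : Type*} [MeasurableSpace Ω] (μ : Measure Ω) [IsProbabilityMeasure μ]
    (u : Ω → Fin n → ℝ) (A : Matrix (Fin n) (Fin n) ℝ) (hA : A.IsSymm)
    (hmeas : ∀ i, Measurable (fun ω => u ω i))
    (hindep : iIndepFun (fun i ω => u ω i) μ)
    (hplus : ∀ i, μ {ω | u ω i = 1} = 1/2)
    (hminus : ∀ i, μ {ω | u ω i = -1} = 1/2) :
    variance (fun ω => dotProduct (u ω) (A.mulVec (u ω))) μ
      = 2 * ((∑ j, ∑ l, (A j l) ^ 2) - ∑ j, (A j j) ^ 2) := by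
  have hsq (i : Fin n) : ∀ᵐ ω ∂μ, u ω i ^ 2 = 1 :=
    (ae_eq_one_or_eq_neg_one_of_rademacher (hmeas i) (hplus i) (hminus i)).mono
      fun ω h ↦ by rcases h with h | h <;> simp [h]
  exact variance_dotProduct_mulVec_of_rademacher hindep (fun i ↦ (hmeas i).aemeasurable)
    (fun i ↦ integral_eq_zero_of_rademacher (hmeas i) (hplus i) (hminus i)) hsq hA
end

section
/- Symmetric square-root factorization of identity-plus-low-rank: let Ũ ∈ ℝ^{n×r} and Λ ∈ ℝ^{r×r} be such that I + Ũ Λ Ũᵀ is positive definite, let Ũᵀ Ũ = L Lᵀ (Cholesky) with L invertible, let I_r + Lᵀ Λ L = G Gᵀ with G invertible, and set X = L^{-ᵀ}(G - I_r)L^{-1}. Then (I_n + Ũ X Ũᵀ)(I_n + Ũ X Ũᵀ)ᵀ = I_n + Ũ Λ Ũᵀ. -/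
open Matrix

/-- Symmetric square-root factorization of an identity-plus-low-rank matrix
(Theorem 3.1 of Ambikasaran–O'Neil). -/
theorem identity_plus_lowrank_symmetric_factorization
    {n r : ℕ} (U : Matrix (Fin n) (Fin r) ℝ) (Λ L G : Matrix (Fin r) (Fin r) ℝ)
    (hΛ : Λ.IsSymm)
    (hpd : ((1 : Matrix (Fin n) (Fin n) ℝ) + U * Λ * Uᵀ).PosDef)
    (hL : Uᵀ * U = L * Lᵀ) (hLunit : IsUnit L.det)
    (hG : (1 : Matrix (Fin r) (Fin r) ℝ) + Lᵀ * Λ * L = G * Gᵀ) (hGunit : IsUnit G.det) :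
    ((1 : Matrix (Fin n) (Fin n) ℝ) + U * ((Lᵀ)⁻¹ * (G - 1) * L⁻¹) * Uᵀ)
        * ((1 : Matrix (Fin n) (Fin n) ℝ) + U * ((Lᵀ)⁻¹ * (G - 1) * L⁻¹) * Uᵀ)ᵀ
      = (1 : Matrix (Fin n) (Fin n) ℝ) + U * Λ * Uᵀ := by
  have hLT : IsUnit Lᵀ.det := by simpa [Matrix.det_transpose] using hLunit
  have hLinv : L * L⁻¹ = 1 := Matrix.mul_nonsing_inv _ hLunit
  have hLinv' : L⁻¹ * L = 1 := Matrix.nonsing_inv_mul _ hLunit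
  have hLTinv : Lᵀ * (Lᵀ)⁻¹ = 1 := Matrix.mul_nonsing_inv _ hLT
  have hLTinv' : (Lᵀ)⁻¹ * Lᵀ = 1 := Matrix.nonsing_inv_mul _ hLT
  set X : Matrix (Fin r) (Fin r) ℝ := (Lᵀ)⁻¹ * (G - 1) * L⁻¹ with hX
  have hXT : Xᵀ = (Lᵀ)⁻¹ * (Gᵀ - 1) * L⁻¹ := by
    rw [hX, Matrix.transpose_mul, Matrix.transpose_mul, Matrix.transpose_nonsing_inv,
      Matrix.transpose_nonsing_inv, Matrix.transpose_sub, Matrix.transpose_one,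
      Matrix.transpose_transpose, Matrix.mul_assoc]
  have hkey : X + Xᵀ + X * (L * Lᵀ) * Xᵀ = Λ := by
    have h1 : X * (L * Lᵀ) * Xᵀ = (Lᵀ)⁻¹ * ((G - 1) * (Gᵀ - 1)) * L⁻¹ := by
      rw [hX, hXT]
      calc (Lᵀ)⁻¹ * (G - 1) * L⁻¹ * (L * Lᵀ) * ((Lᵀ)⁻¹ * (Gᵀ - 1) * L⁻¹)
          = (Lᵀ)⁻¹ * (G - 1) * ((L⁻¹ * L) * (Lᵀ * (Lᵀ)⁻¹)) * ((Gᵀ - 1) * L⁻¹) := by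
            simp only [Matrix.mul_assoc]
        _ = (Lᵀ)⁻¹ * ((G - 1) * (Gᵀ - 1)) * L⁻¹ := by
            rw [hLinv', hLTinv]; simp only [Matrix.mul_one, Matrix.mul_assoc]
    have h2 : X + Xᵀ + X * (L * Lᵀ) * Xᵀ = (Lᵀ)⁻¹ * (G * Gᵀ - 1) * L⁻¹ := by
      rw [h1, hX, hXT]
      have : (G - 1) + (Gᵀ - 1) + (G - 1) * (Gᵀ - 1) = G * Gᵀ - 1 := by
        noncomm_ring
      rw [← this]
      simp only [Matrix.mul_add, Matrix.add_mul]
    rw [h2, ← hG]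
    have : (1 : Matrix (Fin r) (Fin r) ℝ) + Lᵀ * Λ * L - 1 = Lᵀ * Λ * L := by abel
    rw [this]
    calc (Lᵀ)⁻¹ * (Lᵀ * Λ * L) * L⁻¹
        = ((Lᵀ)⁻¹ * Lᵀ) * Λ * (L * L⁻¹) := by simp only [Matrix.mul_assoc]
      _ = Λ := by rw [hLTinv', hLinv]; simp
  have hexpand : ((1 : Matrix (Fin n) (Fin n) ℝ) + U * X * Uᵀ)
      * ((1 : Matrix (Fin n) (Fin n) ℝ) + U * X * Uᵀ)ᵀ
      = 1 + U * (X + Xᵀ + X * (Uᵀ * U) * Xᵀ) * Uᵀ := by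
    rw [Matrix.transpose_add, Matrix.transpose_one, Matrix.transpose_mul,
      Matrix.transpose_mul, Matrix.transpose_transpose]
    simp only [Matrix.mul_add, Matrix.add_mul, Matrix.one_mul, Matrix.mul_one,
      Matrix.mul_assoc]
    abel
  rw [hexpand, hL, hkey]
end
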